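/- arXiv:2507.10732 — 3 statements merged into one kernel-verified Lean document; each statement's English description precedes it below -/
import Mathlib

section
/- Let τ : S → (D S)^A be an LMP on a pseudometric space ⟨S,d⟩ and suppose d is a fixpoint of the functional Δ_LP (i.e., Δ_LP(d) = d). Then for every ε > 0, the relation R_ε = {(s,t) | d(s,t) < ε} is an ε-bisimulation. -/
open scoped ENNReal Classical

noncomputable section

def mass {S : Type*} (φ : S → ℝ≥0∞) (X : Set S) : ℝ≥0∞ := ∑' x : X, φ x

def IsSubdist {S : Type*} (φ : S → ℝ≥0∞) : Prop := mass φ Set.univ ≤ 1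

def IsPseudometric {S : Type*} (d : S → S → ℝ≥0∞) : Prop :=
  (∀ x, d x x = 0) ∧ (∀ x y, d x y = d y x) ∧ (∀ x y z, d x z ≤ d x y + d y z)

def Bounded1 {S : Type*} (d : S → S → ℝ≥0∞) : Prop := ∀ x y, d x y ≤ 1

def eball {S : Type*} (d : S → S → ℝ≥0∞) (X : Set S) (ε : ℝ≥0∞) : Set S :=
  {y | ∃ x ∈ X, d x y < ε}

def LP {S : Type*} (d : S → S → ℝ≥0∞) (μ ν : S → ℝ≥0∞) : ℝ≥0∞ :=
  sInf {ε | ∀ X : Set S,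
    mass μ X ≤ mass ν (eball d X ε) + ε ∧ mass ν X ≤ mass μ (eball d X ε) + ε}

def relImg {S : Type*} (R : S → S → Prop) (X : Set S) : Set S := {y | ∃ x ∈ X, R x y}

def IsEpsBisim {S A : Type*} (τ : A → S → S → ℝ≥0∞) (ε : ℝ≥0∞) (R : S → S → Prop) : Prop :=
  Symmetric R ∧ ∀ s t, R s t → ∀ a : A, ∀ X : Set S,
    mass (τ a s) X ≤ mass (τ a t) (relImg R X) + ε

def EpsBisimilar {S A : Type*} (τ : A → S → S → ℝ≥0∞) (ε : ℝ≥0∞) (s t : S) : Prop :=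
  ∃ R, IsEpsBisim τ ε R ∧ R s t

def dstar {S A : Type*} (τ : A → S → S → ℝ≥0∞) (s t : S) : ℝ≥0∞ :=
  sInf {ε | ε ≤ 1 ∧ EpsBisimilar τ ε s t}

def DeltaLP {S A : Type*} (τ : A → S → S → ℝ≥0∞) (d : S → S → ℝ≥0∞) (s₀ s₁ : S) : ℝ≥0∞ :=
  ⨆ a : A, LP d (τ a s₀) (τ a s₁)

lemma mass_mono {S : Type*} (φ : S → ℝ≥0∞) {X Y : Set S} (h : X ⊆ Y) :
    mass φ X ≤ mass φ Y :=
  ENNReal.tsum_mono_subtype φ h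

lemma eball_mono {S : Type*} (d : S → S → ℝ≥0∞) (X : Set S) {ε ε' : ℝ≥0∞} (h : ε ≤ ε') :
    eball d X ε ⊆ eball d X ε' :=
  fun _ ⟨x, hx, hxy⟩ => ⟨x, hx, hxy.trans_le h⟩

lemma mass_le_mass_eball_add_of_LP_lt {S : Type*} {d : S → S → ℝ≥0∞} {μ ν : S → ℝ≥0∞}
    {ε : ℝ≥0∞} (h : LP d μ ν < ε) (X : Set S) :
    mass μ X ≤ mass ν (eball d X ε) + ε := by
  obtain ⟨ε', hε', hε'_lt⟩ := sInf_lt_iff.mp h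
  calc mass μ X ≤ mass ν (eball d X ε') + ε' := (hε' X).1
    _ ≤ mass ν (eball d X ε) + ε :=
      add_le_add (mass_mono ν (eball_mono d X hε'_lt.le)) hε'_lt.le

lemma LP_le_DeltaLP {S A : Type*} (τ : A → S → S → ℝ≥0∞) (d : S → S → ℝ≥0∞) (a : A)
    (s t : S) : LP d (τ a s) (τ a t) ≤ DeltaLP τ d s t :=
  le_iSup (fun a => LP d (τ a s) (τ a t)) a

theorem stmt6_general {S A : Type*} (τ : A → S → S → ℝ≥0∞)
    (d : S → S → ℝ≥0∞) (hd : IsPseudometric d) (hfix : DeltaLP τ d = d)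
    (ε : ℝ≥0∞) :
    IsEpsBisim τ ε (fun s t => d s t < ε) := by
  refine ⟨fun s t hst => (hd.2.1 t s).trans_lt hst, fun s t hst a X => ?_⟩
  have hLP : LP d (τ a s) (τ a t) < ε :=
    calc LP d (τ a s) (τ a t) ≤ DeltaLP τ d s t := LP_le_DeltaLP τ d a s t
      _ = d s t := by rw [hfix]
      _ < ε := hst
  -- `relImg (d · · < ε) X` unfolds to `eball d X ε`.
  exact mass_le_mass_eball_add_of_LP_lt hLP X

theorem stmt6 {S A : Type*} (τ : A → S → S → ℝ≥0∞) (hτ : ∀ a s, IsSubdist (τ a s))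
    (d : S → S → ℝ≥0∞) (hd : IsPseudometric d) (hfix : DeltaLP τ d = d)
    (ε : ℝ≥0∞) (hε : 0 < ε) :
    IsEpsBisim τ ε (fun s t => d s t < ε) :=
  stmt6_general τ d hd hfix ε
end
end

section
/- If s ∼_{ε₁} u and u ∼_{ε₂} t then s ∼_{ε₁+ε₂} t; that is, the composition of an ε₁-bisimulation and an ε₂-bisimulation is contained in an (ε₁+ε₂)-bisimulation. Consequently, the ε-distance d*(s,t) = inf {ε | s ∼_ε t} satisfies the triangle inequality. -/
open scoped ENNReal Classical

noncomputable section

section Relations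

variable {S : Type*} {R₁ R₂ : S → S → Prop}

lemma relImg_mono (h : R₁ ≤ R₂) (X : Set S) : relImg R₁ X ⊆ relImg R₂ X :=
  fun _ ⟨x, hx, hxy⟩ => ⟨x, hx, h _ _ hxy⟩

lemma relImg_comp (X : Set S) : relImg (Relation.Comp R₁ R₂) X = relImg R₂ (relImg R₁ X) := by
  ext z
  constructor
  · rintro ⟨x, hx, y, hxy, hyz⟩
    exact ⟨y, ⟨x, hx, hxy⟩, hyz⟩
  · rintro ⟨y, ⟨x, hx, hxy⟩, hyz⟩
    exact ⟨x, hx, y, hxy, hyz⟩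

end Relations

namespace IsEpsBisim

variable {S A : Type*} {τ : A → S → S → ℝ≥0∞} {ε₁ ε₂ : ℝ≥0∞} {R₁ R₂ : S → S → Prop}

lemma mass_le_comp (h₁ : IsEpsBisim τ ε₁ R₁) (h₂ : IsEpsBisim τ ε₂ R₂) {x y : S}
    (hxy : Relation.Comp R₁ R₂ x y) (a : A) (X : Set S) :
    mass (τ a x) X ≤ mass (τ a y) (relImg (Relation.Comp R₁ R₂) X) + (ε₁ + ε₂) := by
  obtain ⟨z, hxz, hzy⟩ := hxy
  calc mass (τ a x) X ≤ mass (τ a z) (relImg R₁ X) + ε₁ := h₁.2 x z hxz a X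
    _ ≤ mass (τ a y) (relImg R₂ (relImg R₁ X)) + ε₂ + ε₁ := by
        gcongr
        exact h₂.2 z y hzy a _
    _ = mass (τ a y) (relImg (Relation.Comp R₁ R₂) X) + (ε₁ + ε₂) := by
        rw [relImg_comp, add_assoc, add_comm ε₂]

lemma comp (h₁ : IsEpsBisim τ ε₁ R₁) (h₂ : IsEpsBisim τ ε₂ R₂) :
    IsEpsBisim τ (ε₁ + ε₂) (Relation.Comp R₁ R₂ ⊔ Relation.Comp R₂ R₁) := by
  refine ⟨?_, ?_⟩
  · rintro x y (⟨z, hxz, hzy⟩ | ⟨z, hxz, hzy⟩)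
    · exact Or.inr ⟨z, h₂.1 hzy, h₁.1 hxz⟩
    · exact Or.inl ⟨z, h₁.1 hzy, h₂.1 hxz⟩
  · rintro x y (hxy | hxy) a X
    · exact (h₁.mass_le_comp h₂ hxy a X).trans <| by
        gcongr
        exact mass_mono _ (relImg_mono le_sup_left X)
    · rw [add_comm ε₁]
      exact (h₂.mass_le_comp h₁ hxy a X).trans <| by
        gcongr
        exact mass_mono _ (relImg_mono le_sup_right X)

lemma total_of_isSubdist (hτ : ∀ a s, IsSubdist (τ a s)) : IsEpsBisim τ 1 fun _ _ => True := by
  refine ⟨fun _ _ _ => trivial, fun s _ _ a X => ?_⟩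
  calc mass (τ a s) X ≤ mass (τ a s) Set.univ := mass_mono _ (Set.subset_univ X)
    _ ≤ 1 := hτ a s
    _ ≤ _ := le_add_self

end IsEpsBisim

section Distance

variable {S A : Type*} {τ : A → S → S → ℝ≥0∞}

lemma EpsBisimilar.trans {ε₁ ε₂ : ℝ≥0∞} {s u t : S} (h₁ : EpsBisimilar τ ε₁ s u)
    (h₂ : EpsBisimilar τ ε₂ u t) : EpsBisimilar τ (ε₁ + ε₂) s t := by
  obtain ⟨R₁, hR₁, hsu⟩ := h₁
  obtain ⟨R₂, hR₂, hut⟩ := h₂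
  exact ⟨_, hR₁.comp hR₂, Or.inl ⟨u, hsu, hut⟩⟩

lemma dstar_le_one (hτ : ∀ a s, IsSubdist (τ a s)) (s t : S) : dstar τ s t ≤ 1 :=
  sInf_le ⟨le_rfl, _, IsEpsBisim.total_of_isSubdist hτ, trivial⟩

lemma dstar_le_of_epsBisimilar (hτ : ∀ a s, IsSubdist (τ a s)) {ε : ℝ≥0∞} {s t : S}
    (h : EpsBisimilar τ ε s t) : dstar τ s t ≤ ε := by
  rcases le_total ε 1 with hε | hε
  · exact sInf_le ⟨hε, h⟩
  · exact (dstar_le_one hτ s t).trans hε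

lemma dstar_triangle (hτ : ∀ a s, IsSubdist (τ a s)) (s u t : S) :
    dstar τ s t ≤ dstar τ s u + dstar τ u t := by
  change _ ≤ sInf _ + sInf _
  rw [sInf_eq_iInf, sInf_eq_iInf]
  exact ENNReal.le_iInf₂_add_iInf₂ fun _ h₁ _ h₂ => dstar_le_of_epsBisimilar hτ (h₁.2.trans h₂.2)

end Distance

theorem stmt10 {S A : Type*} (τ : A → S → S → ℝ≥0∞) (hτ : ∀ a s, IsSubdist (τ a s)) :
    (∀ (s u t : S) (ε₁ ε₂ : ℝ≥0∞),
      EpsBisimilar τ ε₁ s u → EpsBisimilar τ ε₂ u t → EpsBisimilar τ (ε₁ + ε₂) s t) ∧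
    (∀ s u t : S, dstar τ s t ≤ dstar τ s u + dstar τ u t) :=
  ⟨fun _ _ _ _ _ => EpsBisimilar.trans, dstar_triangle hτ⟩
end
end

section
/- Let (X,c) and (Y,d) be coalgebras of the discrete subdistribution functor D (Markov chains). A relation R ⊆ X × Y satisfies: for every (x,y) ∈ R there exists an ε-coupling β ∈ D R of c(x) and d(y), if and only if R is an ε-simulation, i.e., for all (x,y) ∈ R and all S ⊆ X, c(x)(S) ≤ d(y)(R(S)) + ε. -/
open scoped ENNReal Classical

noncomputable section

def IsEpsCoupling {X Y : Type*} (R : Set (X × Y)) (μ : X → ℝ≥0∞) (ν : Y → ℝ≥0∞)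
    (ε : ℝ≥0∞) (β : X × Y → ℝ≥0∞) : Prop :=
  IsSubdist β ∧ (∀ p : X × Y, p ∉ R → β p = 0) ∧
  (∀ x : X, (∑' y : Y, β (x, y)) ≤ μ x) ∧
  (∀ y : Y, (∑' x : X, β (x, y)) ≤ ν y) ∧
  mass μ Set.univ ≤ mass β R + ε

/-!
The forward direction is a counting argument: the mass a coupling puts on `R` lies either in rows
outside `S`, so it is at most `μ(Sᶜ)`, or in columns of `R(S)`, so it is at most `ν(R(S))`.

For the converse, take a subcoupling `β` (support in `R`, marginals below `μ` and `ν`) of maximal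
total mass. It exists because subcouplings form a compact set in the product topology, on which
the total mass is upper semicontinuous: its tails are uniformly controlled by those of `μ` and `ν`.
Let `S` be the set of rows reachable from rows with spare mass by alternating paths, which go
forward along `R` and backward along entries carrying mass. Every column in `R(S)` is saturated,
as otherwise shifting mass along such a path would increase the total, and every row outside `S`
is saturated by definition. Hence the total mass of `β` is `ν(R(S)) + μ(Sᶜ) ≥ μ(X) - ε`.
-/

open Set Filter Topology

section Mass

variable {S : Type*} {φ ψ : S → ℝ≥0∞} {A B : Set S}

lemma mass_univ (φ : S → ℝ≥0∞) : mass φ univ = ∑' x, φ x := tsum_univ φ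

lemma mass_mono_s19 (φ : S → ℝ≥0∞) (h : A ⊆ B) : mass φ A ≤ mass φ B :=
  ENNReal.tsum_mono_subtype φ h

lemma mass_le_mass (h : ∀ x ∈ A, φ x ≤ ψ x) : mass φ A ≤ mass ψ A :=
  ENNReal.tsum_le_tsum fun x => h x x.2

lemma mass_congr (h : ∀ x ∈ A, φ x = ψ x) : mass φ A = mass ψ A :=
  tsum_congr fun x => h x x.2

lemma mass_congr_set (h : ∀ x, φ x ≠ 0 → (x ∈ A ↔ x ∈ B)) : mass φ A = mass φ B := by
  simp only [mass, tsum_subtype]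
  congr 1 with x
  by_cases hx : φ x = 0
  · simp [Set.indicator_apply, hx]
  · simp only [Set.indicator_apply, h x hx]

lemma mass_union_le (φ : S → ℝ≥0∞) (A B : Set S) : mass φ (A ∪ B) ≤ mass φ A + mass φ B :=
  ENNReal.tsum_union_le φ A B

lemma mass_add_mass_compl (φ : S → ℝ≥0∞) (A : Set S) :
    mass φ A + mass φ Aᶜ = mass φ univ :=
  (ENNReal.summable.tsum_add_tsum_compl ENNReal.summable).trans (tsum_univ φ).symm

lemma mass_ne_top (hφ : ∑' x, φ x ≠ ∞) (A : Set S) : mass φ A ≠ ∞ :=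
  ne_top_of_le_ne_top hφ ((mass_mono_s19 φ (subset_univ A)).trans_eq (mass_univ φ))

lemma tendsto_mass_compl_atTop_zero (hφ : ∑' x, φ x ≠ ∞) :
    Tendsto (fun s : Finset S => mass φ (↑s)ᶜ) atTop (𝓝 0) :=
  ENNReal.tendsto_tsum_compl_atTop_zero hφ

variable {X Y : Type*}

lemma mass_prod_univ (β : X × Y → ℝ≥0∞) (A : Set X) :
    mass β (A ×ˢ univ) = mass (fun x => ∑' y, β (x, y)) A := by
  rw [mass, ← (Equiv.Set.prod A univ).symm.tsum_eq, ENNReal.tsum_prod']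
  exact tsum_congr fun x => (Equiv.Set.univ Y).tsum_eq fun y => β (x, y)

lemma mass_univ_prod (β : X × Y → ℝ≥0∞) (B : Set Y) :
    mass β (univ ×ˢ B) = mass (fun y => ∑' x, β (x, y)) B := by
  rw [mass, ← (Equiv.Set.prod univ B).symm.tsum_eq, ENNReal.tsum_prod', ENNReal.tsum_comm]
  exact tsum_congr fun y => (Equiv.Set.univ X).tsum_eq fun x => β (x, y)

lemma mass_finset_prod (β : X × Y → ℝ≥0∞) (F : Finset X) (G : Finset Y) :
    mass β (↑F ×ˢ ↑G) = ∑ p ∈ F ×ˢ G, β p := by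
  rw [← Finset.coe_product]
  exact Finset.tsum_subtype (F ×ˢ G) β

end Mass

lemma IsSubdist.tsum_ne_top {S : Type*} {φ : S → ℝ≥0∞} (h : IsSubdist φ) : ∑' x, φ x ≠ ∞ :=
  ne_top_of_le_ne_top ENNReal.one_ne_top ((mass_univ φ).symm.trans_le h)

section Subcoupling

variable {X Y : Type*} {R : Set (X × Y)} {μ : X → ℝ≥0∞} {ν : Y → ℝ≥0∞} {β γ : X × Y → ℝ≥0∞}

variable (R μ ν) in
structure IsSubcoupling (β : X × Y → ℝ≥0∞) : Prop where
  eq_zero_of_notMem : ∀ p ∉ R, β p = 0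
  row_le : ∀ x, ∑' y, β (x, y) ≤ μ x
  col_le : ∀ y, ∑' x, β (x, y) ≤ ν y

lemma isSubcoupling_zero : IsSubcoupling R μ ν 0 :=
  ⟨fun _ _ => rfl, fun _ => by simp, fun _ => by simp⟩

lemma IsEpsCoupling.isSubcoupling {ε : ℝ≥0∞} (h : IsEpsCoupling R μ ν ε β) :
    IsSubcoupling R μ ν β :=
  ⟨h.2.1, h.2.2.1, h.2.2.2.1⟩

lemma IsSubcoupling.mono (hβ : IsSubcoupling R μ ν β) (hγ : γ ≤ β) : IsSubcoupling R μ ν γ where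
  eq_zero_of_notMem p hp := le_antisymm ((hγ p).trans_eq (hβ.eq_zero_of_notMem p hp)) zero_le
  row_le x := (ENNReal.tsum_le_tsum fun y => hγ (x, y)).trans (hβ.row_le x)
  col_le y := (ENNReal.tsum_le_tsum fun x => hγ (x, y)).trans (hβ.col_le y)

lemma IsSubcoupling.tsum_le (hβ : IsSubcoupling R μ ν β) : ∑' p, β p ≤ ∑' x, μ x := by
  rw [ENNReal.tsum_prod']
  exact ENNReal.tsum_le_tsum hβ.row_le

lemma IsSubcoupling.mass_eq_tsum (hβ : IsSubcoupling R μ ν β) : mass β R = ∑' p, β p := by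
  rw [← mass_univ]
  exact mass_congr_set fun p hp => ⟨fun _ => trivial, fun _ => by_contra fun h =>
    hp (hβ.eq_zero_of_notMem p h)⟩

lemma IsSubcoupling.mass_le {A : Set (X × Y)} {B : Set X} {C : Set Y}
    (hβ : IsSubcoupling R μ ν β) (h : A ⊆ B ×ˢ univ ∪ univ ×ˢ C) :
    mass β A ≤ mass μ B + mass ν C :=
  calc mass β A ≤ mass β (B ×ˢ univ ∪ univ ×ˢ C) := mass_mono_s19 β h
    _ ≤ mass β (B ×ˢ univ) + mass β (univ ×ˢ C) := mass_union_le β _ _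
    _ ≤ mass μ B + mass ν C := by
      rw [mass_prod_univ, mass_univ_prod]
      exact add_le_add (mass_le_mass fun x _ => hβ.row_le x) (mass_le_mass fun y _ => hβ.col_le y)

theorem IsEpsCoupling.mass_le_mass_image_add {ε : ℝ≥0∞} (hμ : ∑' x, μ x ≠ ∞)
    (h : IsEpsCoupling R μ ν ε β) (S : Set X) :
    mass μ S ≤ mass ν (SetRel.image R S) + ε := by
  have hR : R ⊆ Sᶜ ×ˢ univ ∪ univ ×ˢ SetRel.image R S := by
    rintro ⟨x, y⟩ hxy
    by_cases hx : x ∈ S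
    · exact Or.inr ⟨trivial, x, hx, hxy⟩
    · exact Or.inl ⟨hx, trivial⟩
  refine (ENNReal.add_le_add_iff_right (mass_ne_top hμ Sᶜ)).1 ?_
  calc mass μ S + mass μ Sᶜ = mass μ univ := mass_add_mass_compl μ S
    _ ≤ mass β R + ε := h.2.2.2.2
    _ ≤ mass μ Sᶜ + mass ν (SetRel.image R S) + ε := by gcongr; exact h.isSubcoupling.mass_le hR
    _ = mass ν (SetRel.image R S) + ε + mass μ Sᶜ := by ring

end Subcoupling

section MaximalSubcoupling

variable {X Y : Type*} {R : Set (X × Y)} {μ : X → ℝ≥0∞} {ν : Y → ℝ≥0∞} {β : X × Y → ℝ≥0∞}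

lemma isClosed_setOf_isSubcoupling : IsClosed {β : X × Y → ℝ≥0∞ | IsSubcoupling R μ ν β} := by
  have h : {β : X × Y → ℝ≥0∞ | IsSubcoupling R μ ν β} =
      (⋂ p ∈ Rᶜ, {β | β p = 0}) ∩ (⋂ x, {β | ∑' y, β (x, y) ≤ μ x}) ∩
        ⋂ y, {β | ∑' x, β (x, y) ≤ ν y} := by
    ext β
    simp only [mem_ofPred_eq, mem_inter_iff, mem_iInter, mem_compl_iff]
    exact ⟨fun h => ⟨⟨h.1, h.2⟩, h.3⟩, fun h => ⟨h.1.1, h.1.2, h.2⟩⟩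
  rw [h]
  refine ((isClosed_biInter fun p _ => isClosed_eq (continuous_apply p) continuous_const).inter
    (isClosed_iInter fun x => ?_)).inter (isClosed_iInter fun y => ?_)
  · exact (lowerSemicontinuous_tsum fun y => (continuous_apply (x, y)).lowerSemicontinuous)
      |>.isClosed_preimage (μ x)
  · exact (lowerSemicontinuous_tsum fun x => (continuous_apply (x, y)).lowerSemicontinuous)
      |>.isClosed_preimage (ν y)

lemma IsSubcoupling.tsum_le_sum_add_tails (hβ : IsSubcoupling R μ ν β) (F : Finset X)
    (G : Finset Y) :
    ∑' p, β p ≤ ∑ p ∈ F ×ˢ G, β p + (mass μ (↑F)ᶜ + mass ν (↑G)ᶜ) := by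
  rw [← mass_univ, ← mass_add_mass_compl β (↑F ×ˢ ↑G), mass_finset_prod]
  gcongr
  exact hβ.mass_le (compl_prod_eq_union _ _).subset

lemma IsSubcoupling.iInf_sum_add_tails (hμ : ∑' x, μ x ≠ ∞) (hν : ∑' y, ν y ≠ ∞)
    (hβ : IsSubcoupling R μ ν β) :
    ⨅ FG : Finset X × Finset Y, (∑ p ∈ FG.1 ×ˢ FG.2, β p + (mass μ (↑FG.1)ᶜ + mass ν (↑FG.2)ᶜ))
      = ∑' p, β p := by
  refine le_antisymm ?_ (le_iInf fun FG => hβ.tsum_le_sum_add_tails FG.1 FG.2)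
  have htails : Tendsto (fun FG : Finset X × Finset Y => ∑' p, β p +
      (mass μ (↑FG.1)ᶜ + mass ν (↑FG.2)ᶜ)) (atTop ×ˢ atTop) (𝓝 (∑' p, β p + (0 + 0))) :=
    tendsto_const_nhds.add (((tendsto_mass_compl_atTop_zero hμ).comp tendsto_fst).add
      ((tendsto_mass_compl_atTop_zero hν).comp tendsto_snd))
  rw [add_zero, add_zero] at htails
  refine ge_of_tendsto' htails fun FG => iInf_le_of_le FG ?_
  gcongr
  exact ENNReal.sum_le_tsum _

lemma upperSemicontinuousOn_tsum_setOf_isSubcoupling (hμ : ∑' x, μ x ≠ ∞)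
    (hν : ∑' y, ν y ≠ ∞) :
    UpperSemicontinuousOn (fun β : X × Y → ℝ≥0∞ => ∑' p, β p) {β | IsSubcoupling R μ ν β} := by
  have husc : UpperSemicontinuous fun β : X × Y → ℝ≥0∞ => ⨅ FG : Finset X × Finset Y,
      (∑ p ∈ FG.1 ×ˢ FG.2, β p + (mass μ (↑FG.1)ᶜ + mass ν (↑FG.2)ᶜ)) :=
    upperSemicontinuous_iInf fun FG => Continuous.upperSemicontinuous (by fun_prop)
  intro β hβ t (ht : ∑' p, β p < t)
  rw [← hβ.iInf_sum_add_tails hμ hν] at ht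
  filter_upwards [husc.upperSemicontinuousWithinAt _ β t ht, self_mem_nhdsWithin]
    with β' hlt hβ'
  rwa [← hβ'.iInf_sum_add_tails hμ hν]

theorem exists_isMaxOn_tsum_isSubcoupling (hμ : ∑' x, μ x ≠ ∞) (hν : ∑' y, ν y ≠ ∞) :
    ∃ β ∈ {β | IsSubcoupling R μ ν β}, IsMaxOn (fun β => ∑' p, β p) {β | IsSubcoupling R μ ν β} β :=
  (upperSemicontinuousOn_tsum_setOf_isSubcoupling hμ hν).exists_isMaxOn ⟨0, isSubcoupling_zero⟩
    isClosed_setOf_isSubcoupling.isCompact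

end MaximalSubcoupling

section MaxFlowMinCut

variable {X Y : Type*} {R : Set (X × Y)} {μ : X → ℝ≥0∞} {ν : Y → ℝ≥0∞} {β γ : X × Y → ℝ≥0∞}

lemma tsum_add_single (β : X × Y → ℝ≥0∞) (q : X × Y) (δ : ℝ≥0∞) :
    ∑' p, (β + Pi.single q δ : X × Y → ℝ≥0∞) p = ∑' p, β p + δ := by
  simp only [Pi.add_apply, ENNReal.tsum_add, tsum_pi_single]

lemma tsum_row_add_single (β : X × Y → ℝ≥0∞) (a : X) (b : Y) (δ : ℝ≥0∞) (x : X) :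
    ∑' y, (β + Pi.single (a, b) δ : X × Y → ℝ≥0∞) (x, y) =
      ∑' y, β (x, y) + (Pi.single a δ : X → ℝ≥0∞) x := by
  simp only [Pi.add_apply, ENNReal.tsum_add, Pi.single_apply, Prod.mk.injEq]
  split_ifs with hx <;> simp [hx]

lemma tsum_col_add_single (β : X × Y → ℝ≥0∞) (a : X) (b : Y) (δ : ℝ≥0∞) (y : Y) :
    ∑' x, (β + Pi.single (a, b) δ : X × Y → ℝ≥0∞) (x, y) =
      ∑' x, β (x, y) + (Pi.single b δ : Y → ℝ≥0∞) y := by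
  simp only [Pi.add_apply, ENNReal.tsum_add, Pi.single_apply, Prod.mk.injEq]
  split_ifs with hy <;> simp [hy]

lemma IsSubcoupling.add_single {x : X} {y : Y} {δ : ℝ≥0∞} (hβ : IsSubcoupling R μ ν β)
    (hxy : (x, y) ∈ R) (hx : ∑' y', β (x, y') + δ ≤ μ x) (hy : ∑' x', β (x', y) + δ ≤ ν y) :
    IsSubcoupling R μ ν (β + Pi.single (x, y) δ) where
  eq_zero_of_notMem p hp := by
    rw [Pi.add_apply, hβ.eq_zero_of_notMem p hp,
      Pi.single_eq_of_ne (ne_of_mem_of_not_mem hxy hp).symm, add_zero]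
  row_le a := by
    rw [tsum_row_add_single]
    rcases eq_or_ne a x with rfl | ha
    · simpa using hx
    · simpa [ha] using hβ.row_le a
  col_le b := by
    rw [tsum_col_add_single]
    rcases eq_or_ne b y with rfl | hb
    · simpa using hy
    · simpa [hb] using hβ.col_le b

lemma IsSubcoupling.tsum_col_eq_of_isMaxOn_of_row_lt {x : X} {y : Y} (hμ : ∑' x, μ x ≠ ∞)
    (hβ : IsSubcoupling R μ ν β)
    (hmax : IsMaxOn (fun β => ∑' p, β p) {β | IsSubcoupling R μ ν β} β)
    (hxy : (x, y) ∈ R) (hx : ∑' y', β (x, y') < μ x) : ∑' x', β (x', y) = ν y := by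
  refine le_antisymm (hβ.col_le y) (not_lt.1 fun hy => ?_)
  set δ := min (μ x - ∑' y', β (x, y')) (ν y - ∑' x', β (x', y))
  have hδ : 0 < δ := lt_min (tsub_pos_of_lt hx) (tsub_pos_of_lt hy)
  have hβ' : IsSubcoupling R μ ν (β + Pi.single (x, y) δ) :=
    hβ.add_single hxy (add_le_of_le_tsub_left_of_le hx.le (min_le_left _ _))
      (add_le_of_le_tsub_left_of_le hy.le (min_le_right _ _))
  have hfin : ∑' p, β p ≠ ∞ := ne_top_of_le_ne_top hμ hβ.tsum_le
  have := hmax hβ'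
  simp only [mem_ofPred_eq, tsum_add_single] at this
  exact (ENNReal.lt_add_right hfin hδ.ne').not_ge this

/-- Moving mass `δ` from `(x, y')` to `(x, y)` keeps the rows of `β` and frees capacity in
column `y'`. -/
lemma IsSubcoupling.exists_shift {x : X} {y y' : Y} (hν : ν y' ≠ ∞)
    (hβ : IsSubcoupling R μ ν β) (hxy : (x, y) ∈ R) (hy : ∑' x', β (x', y) < ν y)
    (hxy' : β (x, y') ≠ 0) (hne : y' ≠ y) :
    ∃ β₁, IsSubcoupling R μ ν β₁ ∧ ∑' p, β₁ p = ∑' p, β p ∧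
      (∀ a, ∑' b, β₁ (a, b) = ∑' b, β (a, b)) ∧ (∀ p, β p ≠ 0 → β₁ p ≠ 0) ∧
      ∑' x', β₁ (x', y') < ν y' := by
  have hfin : β (x, y') ≠ ∞ := ne_top_of_le_ne_top hν ((ENNReal.le_tsum x).trans (hβ.col_le y'))
  set δ := min (β (x, y') / 2) (ν y - ∑' x', β (x', y))
  have hδ : 0 < δ := lt_min (ENNReal.half_pos hxy') (tsub_pos_of_lt hy)
  have hδβ : δ < β (x, y') := (min_le_left _ _).trans_lt (ENNReal.half_lt_self hxy' hfin)
  set γ := Function.update β (x, y') (β (x, y') - δ)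
  have hγ_ne : ∀ p, β p ≠ 0 → γ p ≠ 0 := by
    intro p hp
    rcases eq_or_ne p (x, y') with rfl | hp'
    · simpa [γ] using (tsub_pos_of_lt hδβ).ne'
    · simpa [γ, hp'] using hp
  have hβγ : β = γ + Pi.single (x, y') δ := by
    funext p
    rcases eq_or_ne p (x, y') with rfl | hp
    · simp [γ, tsub_add_cancel_of_le hδβ.le]
    · simp [γ, hp]
  have hγ : IsSubcoupling R μ ν γ := hβ.mono fun p => by
    rw [hβγ, Pi.add_apply]; exact le_self_add
  have hrow (a : X) : ∑' b, β (a, b) = ∑' b, γ (a, b) + (Pi.single x δ : X → ℝ≥0∞) a := by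
    rw [← tsum_row_add_single γ x y' δ, ← hβγ]
  have hcol (b : Y) : ∑' a, β (a, b) = ∑' a, γ (a, b) + (Pi.single y' δ : Y → ℝ≥0∞) b := by
    rw [← tsum_col_add_single γ x y' δ, ← hβγ]
  refine ⟨γ + Pi.single (x, y) δ, hγ.add_single hxy ?_ ?_, ?_, fun a => ?_, fun p hp => ?_, ?_⟩
  · simpa [hrow] using hβ.row_le x
  · calc ∑' a, γ (a, y) + δ = ∑' a, β (a, y) + δ := by simp [hcol, hne.symm]
      _ ≤ ν y := add_le_of_le_tsub_left_of_le hy.le (min_le_right _ _)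
  · rw [tsum_add_single, hβγ, tsum_add_single]
  · rw [tsum_row_add_single, hrow]
  · exact ne_of_gt ((pos_iff_ne_zero.2 (hγ_ne p hp)).trans_le le_self_add)
  · have hγy' : ∑' a, γ (a, y') ≠ ∞ := ne_top_of_le_ne_top hν (hγ.col_le y')
    calc ∑' a, (γ + Pi.single (x, y) δ : X × Y → ℝ≥0∞) (a, y') = ∑' a, γ (a, y') := by
          rw [tsum_col_add_single, Pi.single_eq_of_ne hne, add_zero]
      _ < ∑' a, γ (a, y') + δ := ENNReal.lt_add_right hγy' hδ.ne'
      _ = ∑' a, β (a, y') := by simp [hcol]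
      _ ≤ ν y' := hβ.col_le y'

variable (R μ) in
def alternatingReach (β : X × Y → ℝ≥0∞) : ℕ → Set X
  | 0 => {x | ∑' y, β (x, y) < μ x}
  | n + 1 => alternatingReach β n ∪
      {x | ∃ x' ∈ alternatingReach β n, ∃ y, (x', y) ∈ R ∧ β (x, y) ≠ 0}

lemma alternatingReach_mono (hrow : ∀ x, ∑' y, γ (x, y) = ∑' y, β (x, y))
    (hsupp : ∀ p, β p ≠ 0 → γ p ≠ 0) :
    ∀ n, alternatingReach R μ β n ⊆ alternatingReach R μ γ n
  | 0 => fun x hx => (hrow x).trans_lt hx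
  | n + 1 => union_subset_union (alternatingReach_mono hrow hsupp n)
      fun _ ⟨x', hx', y, hx'y, hy⟩ =>
        ⟨x', alternatingReach_mono hrow hsupp n hx', y, hx'y, hsupp _ hy⟩

theorem IsSubcoupling.tsum_col_eq_of_mem_alternatingReach {n : ℕ} {x : X} {y : Y}
    (hμ : ∑' x, μ x ≠ ∞) (hν : ∀ y, ν y ≠ ∞) (hβ : IsSubcoupling R μ ν β)
    (hmax : IsMaxOn (fun β => ∑' p, β p) {β | IsSubcoupling R μ ν β} β)
    (hx : x ∈ alternatingReach R μ β n) (hxy : (x, y) ∈ R) : ∑' x', β (x', y) = ν y := by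
  induction n generalizing β x y with
  | zero => exact hβ.tsum_col_eq_of_isMaxOn_of_row_lt hμ hmax hxy hx
  | succ n ih =>
    rcases hx with hx | ⟨x', hx', y', hx'y', hxy'⟩
    · exact ih hβ hmax hx hxy
    rcases eq_or_ne y' y with rfl | hne
    · exact ih hβ hmax hx' hx'y'
    refine le_antisymm (hβ.col_le y) (not_lt.1 fun hy => ?_)
    obtain ⟨β₁, hβ₁, htot, hrow, hsupp, hlt⟩ := hβ.exists_shift (hν y') hxy hy hxy' hne
    have hmax₁ : IsMaxOn (fun β => ∑' p, β p) {β | IsSubcoupling R μ ν β} β₁ :=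
      fun β' hβ' => (hmax hβ').trans_eq htot.symm
    exact hlt.ne (ih hβ₁ hmax₁ (alternatingReach_mono hrow hsupp n hx') hx'y')

/-- Max-flow min-cut, with the cut given by the rows reachable by alternating paths. -/
theorem IsSubcoupling.exists_tsum_eq_mass_image_add_mass_compl (hμ : ∑' x, μ x ≠ ∞)
    (hν : ∀ y, ν y ≠ ∞) (hβ : IsSubcoupling R μ ν β)
    (hmax : IsMaxOn (fun β => ∑' p, β p) {β | IsSubcoupling R μ ν β} β) :
    ∃ S : Set X, ∑' p, β p = mass ν (SetRel.image R S) + mass μ Sᶜ := by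
  set S := ⋃ n, alternatingReach R μ β n
  refine ⟨S, ?_⟩
  have hcol : ∀ y ∈ SetRel.image R S, ∑' x, β (x, y) = ν y := by
    rintro y ⟨x, hx, hxy⟩
    obtain ⟨n, hn⟩ := mem_iUnion.1 hx
    exact hβ.tsum_col_eq_of_mem_alternatingReach hμ hν hmax hn hxy
  have hrow : ∀ x ∈ Sᶜ, ∑' y, β (x, y) = μ x := fun x hx =>
    le_antisymm (hβ.row_le x) (not_lt.1 fun h => hx (mem_iUnion.2 ⟨0, h⟩))
  have hcut : mass β (S ×ˢ univ) = mass β (univ ×ˢ SetRel.image R S) := by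
    refine mass_congr_set fun ⟨x, y⟩ hxy => ⟨fun hx => ⟨trivial, x, hx.1, ?_⟩, ?_⟩
    · exact by_contra fun h => hxy (hβ.eq_zero_of_notMem _ h)
    · rintro ⟨-, x', hx', hx'y⟩
      obtain ⟨n, hn⟩ := mem_iUnion.1 hx'
      exact ⟨mem_iUnion.2 ⟨n + 1, Or.inr ⟨x', hn, y, hx'y, hxy⟩⟩, trivial⟩
  have hcompl : Sᶜ ×ˢ (univ : Set Y) = (S ×ˢ univ)ᶜ := by simp [compl_prod_eq_union]
  rw [← mass_congr hcol, ← mass_univ_prod, ← hcut, ← mass_congr hrow, ← mass_prod_univ, hcompl,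
    mass_add_mass_compl, mass_univ]

theorem exists_isEpsCoupling_of_forall_mass_le {ε : ℝ≥0∞} (hμ : IsSubdist μ)
    (hν : ∑' y, ν y ≠ ∞)
    (h : ∀ S : Set X, mass μ S ≤ mass ν (SetRel.image R S) + ε) :
    ∃ β, IsEpsCoupling R μ ν ε β := by
  obtain ⟨β, hβ, hmax⟩ := exists_isMaxOn_tsum_isSubcoupling hμ.tsum_ne_top hν
  have hν' : ∀ y, ν y ≠ ∞ := fun y => ne_top_of_le_ne_top hν (ENNReal.le_tsum y)
  obtain ⟨S, hS⟩ := hβ.exists_tsum_eq_mass_image_add_mass_compl hμ.tsum_ne_top hν' hmax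
  refine ⟨β, ?_, hβ.eq_zero_of_notMem, hβ.row_le, hβ.col_le, ?_⟩
  · rw [IsSubdist, mass_univ]
    exact hβ.tsum_le.trans ((mass_univ μ).symm.trans_le hμ)
  calc mass μ univ = mass μ S + mass μ Sᶜ := (mass_add_mass_compl μ S).symm
    _ ≤ mass ν (SetRel.image R S) + ε + mass μ Sᶜ := by gcongr; exact h S
    _ = mass β R + ε := by rw [hβ.mass_eq_tsum, hS]; ring

end MaxFlowMinCut

theorem stmt19 {X Y : Type*} (c : X → X → ℝ≥0∞) (d : Y → Y → ℝ≥0∞)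
    (hc : ∀ x, IsSubdist (c x)) (hd : ∀ y, IsSubdist (d y))
    (R : Set (X × Y)) (ε : ℝ≥0∞) :
    (∀ p ∈ R, ∃ β : X × Y → ℝ≥0∞, IsEpsCoupling R (c p.1) (d p.2) ε β) ↔
      (∀ p ∈ R, ∀ S : Set X,
        mass (c p.1) S ≤ mass (d p.2) {y : Y | ∃ x ∈ S, (x, y) ∈ R} + ε) := by
  refine ⟨fun h p hp S => ?_, fun h p hp => ?_⟩
  · obtain ⟨β, hβ⟩ := h p hp
    exact hβ.mass_le_mass_image_add (hc p.1).tsum_ne_top S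
  · exact exists_isEpsCoupling_of_forall_mass_le (hc p.1) (hd p.2).tsum_ne_top (h p hp)
end
end
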